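/- (Corollary 4.1: first moment of the capped period return via the log-return density.) Let α > 0, β ∈ (−π, π), d > 0, m ∈ ℝ, and let Y be a real random variable with Meixner density f(·; α, β, d, m). Let c ≥ 0, g ∈ ℝ, n ≥ 1 and set Z := min(c, e^{Y} − 1) − g/n. Then E[Z] = c − g/n + ∫_{−∞}^{ln(1+c)} ( e^{u} − 1 − c ) · f(u; α, β, d, m) du. -/

import Mathlib

open MeasureTheory Real Set

/-- The Meixner probability density with scaling parameter `α`, skewness parameter `β`,
peakedness parameter `d` and location parameter `m`. -/
noncomputable def meixnerDensity (α β d m : ℝ) (x : ℝ) : ℝ :=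
  (2 * Real.cos (β / 2)) ^ (2 * d) / (2 * Real.pi * α * Real.Gamma (2 * d)) *
    Real.exp (β * (x - m) / α) *
    ‖Complex.Gamma ((d : ℂ) + Complex.I * (((x - m) / α : ℝ) : ℂ))‖ ^ 2

/-! The capped return `min c (e^y - 1)` equals `c` plus a shortfall supported on `y ≤ log (1 + c)`
and bounded there by `1 + c`. Taking expectations, the constant part gives `c - g/n`, and the
shortfall is integrated against the law of `Y`, which is `f(u) du` by hypothesis. -/

lemma meixnerDensity_nonneg {α β d : ℝ} (hα : 0 < α) (hβ : β ∈ Ioo (-π) π) (hd : 0 < d)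
    (m x : ℝ) : 0 ≤ meixnerDensity α β d m x := by
  have hcos : 0 < cos (β / 2) := cos_pos_of_mem_Ioo ⟨by linarith [hβ.1], by linarith [hβ.2]⟩
  have hΓ : 0 < Gamma (2 * d) := Gamma_pos_of_pos (by linarith)
  unfold meixnerDensity
  positivity

lemma continuous_meixnerDensity (α β : ℝ) {d : ℝ} (hd : 0 < d) (m : ℝ) :
    Continuous (meixnerDensity α β d m) := by
  have hline : Continuous fun x : ℝ => (d : ℂ) + Complex.I * (((x - m) / α : ℝ) : ℂ) := by
    fun_prop
  -- `Re (d + i t) = d > 0` keeps the argument of `Γ` away from its poles `0, -1, -2, …`.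
  have hΓ : Continuous fun x : ℝ => Complex.Gamma ((d : ℂ) + Complex.I * (((x - m) / α : ℝ) : ℂ)) :=
    continuous_iff_continuousAt.2 fun x =>
      ((Complex.differentiableAt_Gamma _ fun k hk => by
        have hre : d = -k := by simpa using congrArg Complex.re hk
        linarith [(k.cast_nonneg : (0 : ℝ) ≤ k)]).continuousAt).comp hline.continuousAt
  unfold meixnerDensity
  fun_prop

theorem integral_comp_eq_integral_smul_of_map_eq_withDensity
    {Ω X E : Type*} [MeasurableSpace Ω] [MeasurableSpace X]
    [NormedAddCommGroup E] [NormedSpace ℝ E]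
    {μ : Measure Ω} {ν : Measure X} {Y : Ω → X} (hY : AEMeasurable Y μ)
    {f : X → ℝ} (hf : AEMeasurable f ν) (hf_nonneg : 0 ≤ᵐ[ν] f)
    (hlaw : μ.map Y = ν.withDensity fun x => ENNReal.ofReal (f x))
    {h : X → E} (hh : AEStronglyMeasurable h (μ.map Y)) :
    ∫ ω, h (Y ω) ∂μ = ∫ x, f x • h x ∂ν := by
  rw [← integral_map hY hh, hlaw, integral_withDensity_eq_integral_toReal_smul₀
    hf.ennreal_ofReal (ae_of_all _ fun _ => ENNReal.ofReal_lt_top)]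
  exact integral_congr_ae (hf_nonneg.mono fun x hx => by dsimp only; rw [ENNReal.toReal_ofReal hx])

section CappedReturn

variable {c : ℝ}

lemma min_exp_sub_one_eq_add_indicator (hc : -1 < c) (y : ℝ) :
    min c (exp y - 1) = c + (Iic (log (1 + c))).indicator (fun u => exp u - 1 - c) y := by
  by_cases hy : y ∈ Iic (log (1 + c))
  · have : exp y ≤ 1 + c := (le_log_iff_exp_le (by linarith)).1 hy
    rw [indicator_of_mem hy, min_eq_right (by linarith)]
    ring
  · have : 1 + c < exp y := (log_lt_iff_lt_exp (by linarith)).1 (not_le.1 hy)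
    rw [indicator_of_notMem hy, min_eq_left (by linarith)]
    ring

lemma abs_indicator_exp_sub_one_sub_le (hc : -1 < c) (y : ℝ) :
    |(Iic (log (1 + c))).indicator (fun u => exp u - 1 - c) y| ≤ 1 + c := by
  by_cases hy : y ∈ Iic (log (1 + c))
  · have : exp y ≤ 1 + c := (le_log_iff_exp_le (by linarith)).1 hy
    rw [indicator_of_mem hy, abs_le]
    constructor <;> linarith [exp_pos y]
  · rw [indicator_of_notMem hy, abs_zero]
    linarith

end CappedReturn

theorem mean_capped_return_via_log_density_general (α β d m : ℝ) (hα : 0 < α)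
    (hβ : β ∈ Set.Ioo (-Real.pi) Real.pi) (hd : 0 < d)
    {Ω : Type*} [MeasurableSpace Ω] (μ : Measure Ω) [IsProbabilityMeasure μ]
    (Y : Ω → ℝ) (hY : Measurable Y)
    (hdens : μ.map Y = volume.withDensity (fun x => ENNReal.ofReal (meixnerDensity α β d m x)))
    (c g : ℝ) (hc : 0 ≤ c) (n : ℕ)
    (Z : Ω → ℝ) (hZ : ∀ ω, Z ω = min c (Real.exp (Y ω) - 1) - g / n) :
    (∫ ω, Z ω ∂μ)
      = c - g / n + ∫ u in Set.Iic (Real.log (1 + c)),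
          (Real.exp u - 1 - c) * meixnerDensity α β d m u := by
  have hc' : -1 < c := by linarith
  set S := (Iic (log (1 + c))).indicator fun u => exp u - 1 - c
  have hS : Measurable S := (by fun_prop : Measurable fun u => exp u - 1 - c).indicator
    measurableSet_Iic
  have hSY : Integrable (fun ω => S (Y ω)) μ :=
    .of_bound (hS.comp hY).aestronglyMeasurable (1 + c)
      (ae_of_all _ fun ω => abs_indicator_exp_sub_one_sub_le hc' (Y ω))
  calc ∫ ω, Z ω ∂μ = ∫ ω, (c - g / n) + S (Y ω) ∂μ := by
        congr 1 with ω
        rw [hZ, min_exp_sub_one_eq_add_indicator hc']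
        ring
    _ = c - g / n + ∫ ω, S (Y ω) ∂μ := by
        rw [integral_add (integrable_const _) hSY, integral_const, probReal_univ, one_smul]
    _ = c - g / n + ∫ u, meixnerDensity α β d m u • S u := by
        rw [integral_comp_eq_integral_smul_of_map_eq_withDensity hY.aemeasurable
          (continuous_meixnerDensity α β hd m).aemeasurable
          (ae_of_all _ (meixnerDensity_nonneg hα hβ hd m)) hdens hS.aestronglyMeasurable]
    _ = _ := by
        rw [← integral_indicator measurableSet_Iic]
        congr 2 with u
        rw [smul_eq_mul, ← indicator_mul_right]
        simp only [mul_comm]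

/-- Corollary 4.1: first moment of the capped period return `Z = min(c, e^Y - 1) - g/n`
via the Meixner log-return density. -/
theorem mean_capped_return_via_log_density (α β d m : ℝ) (hα : 0 < α)
    (hβ : β ∈ Set.Ioo (-Real.pi) Real.pi) (hd : 0 < d)
    {Ω : Type*} [MeasurableSpace Ω] (μ : Measure Ω) [IsProbabilityMeasure μ]
    (Y : Ω → ℝ) (hY : Measurable Y)
    (hdens : μ.map Y = volume.withDensity (fun x => ENNReal.ofReal (meixnerDensity α β d m x)))
    (c g : ℝ) (hc : 0 ≤ c) (n : ℕ) (hn : 1 ≤ n)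
    (Z : Ω → ℝ) (hZ : ∀ ω, Z ω = min c (Real.exp (Y ω) - 1) - g / n) :
    (∫ ω, Z ω ∂μ)
      = c - g / n + ∫ u in Set.Iic (Real.log (1 + c)),
          (Real.exp u - 1 - c) * meixnerDensity α β d m u :=
  mean_capped_return_via_log_density_general α β d m hα hβ hd μ Y hY hdens c g hc n Z hZ
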